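/- arXiv:2201.02943 — 2 statements merged into one kernel-verified Lean document; each statement's English description precedes it below -/
import Mathlib

section
/- Let σ > 0 and suppose C_{k+1} ≤ C_k + τ_k - σ λ_k² ‖d_k‖² / Q_{k+1}, where C_k ≥ 0, Σ τ_k < ∞, and 1 ≤ Q_{k+1} ≤ 1/(1-η_max) for some η_max ∈ (0,1). Then lim_{k→∞} λ_k ‖d_k‖ = 0. -/
theorem stmt_3 (C τ lam Q : ℕ → ℝ) {n : ℕ} (d : ℕ → EuclideanSpace ℝ (Fin n))
    (σ ηmax : ℝ) (hσ : 0 < σ) (hηmax : 0 < ηmax ∧ ηmax < 1)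
    (hlam : ∀ k, 0 < lam k)
    (hC : ∀ k, 0 ≤ C k) (hτ : ∀ k, 0 ≤ τ k) (hτsum : Summable τ)
    (hQ : ∀ k, 1 ≤ Q (k + 1) ∧ Q (k + 1) ≤ 1 / (1 - ηmax))
    (hrec : ∀ k, C (k + 1) ≤ C k + τ k - σ * (lam k) ^ 2 * ‖d k‖ ^ 2 / Q (k + 1)) :
    Filter.Tendsto (fun k => lam k * ‖d k‖) Filter.atTop (nhds 0) := by
  set a : ℕ → ℝ := fun k => σ * (lam k) ^ 2 * ‖d k‖ ^ 2 / Q (k + 1) with ha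
  have hQpos : ∀ k, 0 < Q (k + 1) := fun k => lt_of_lt_of_le one_pos (hQ k).1
  have ha0 : ∀ k, 0 ≤ a k := fun k => div_nonneg
    (mul_nonneg (mul_nonneg hσ.le (sq_nonneg _)) (sq_nonneg _)) (hQpos k).le
  have hτle : ∀ k, τ k ≤ ∑' i, τ i := fun k => Summable.le_tsum hτsum k (fun i _ => hτ i)
  -- summability of a
  have hsum : Summable a := by
    apply summable_of_sum_range_le (c := (∑' i, τ i) + C 0) ha0
    intro N
    have key : ∀ N, ∑ k ∈ Finset.range N, a k ≤ (∑ k ∈ Finset.range N, τ k) + C 0 - C N := by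
      intro N
      induction N with
      | zero => simp
      | succ m ih =>
        rw [Finset.sum_range_succ, Finset.sum_range_succ]
        have := hrec m
        nlinarith [this, ih]
    have h1 := key N
    have h2 : ∑ k ∈ Finset.range N, τ k ≤ ∑' i, τ i :=
      Summable.sum_le_tsum _ (fun i _ => hτ i) hτsum
    have := hC N
    linarith
  have hatend : Filter.Tendsto a Filter.atTop (nhds 0) := hsum.tendsto_atTop_zero
  -- λ²‖d‖² ≤ a * (1/(1-ηmax)) / σ
  have hb : Filter.Tendsto (fun k => (lam k * ‖d k‖) ^ 2) Filter.atTop (nhds 0) := by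
    have hbound : ∀ k, (lam k * ‖d k‖) ^ 2 ≤ a k * (1 / (1 - ηmax)) / σ := by
      intro k
      have hQle := (hQ k).2
      have haQ : a k * Q (k + 1) = σ * (lam k) ^ 2 * ‖d k‖ ^ 2 :=
        div_mul_cancel₀ _ (hQpos k).ne'
      have h1 : σ * (lam k) ^ 2 * ‖d k‖ ^ 2 ≤ a k * (1 / (1 - ηmax)) := by
        rw [← haQ]
        exact mul_le_mul_of_nonneg_left hQle (ha0 k)
      rw [mul_pow, le_div_iff₀ hσ]
      nlinarith
    have hlow : ∀ k, 0 ≤ (lam k * ‖d k‖) ^ 2 := fun k => sq_nonneg _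
    have hup : Filter.Tendsto (fun k => a k * (1 / (1 - ηmax)) / σ) Filter.atTop (nhds 0) := by
      have := (hatend.mul_const (1 / (1 - ηmax))).div_const σ
      simpa using this
    exact squeeze_zero hlow hbound hup
  have := hb.sqrt
  simp only [Real.sqrt_zero] at this
  refine this.congr (fun k => ?_)
  exact Real.sqrt_sq (mul_nonneg (hlam k).le (norm_nonneg _))
end

section
/- Suppose λ_k ‖d_k‖ → 0, ‖F_k‖ ≤ ω₁ for all k, ‖F_k - F_{k-1}‖ ≤ L λ_{k-1} ‖d_{k-1}‖, and ‖F_{k-1}‖ ≥ ξ > 0 for all k. Then β̄_k → 0, where β̄_k = max(0, ⟨F_k, y_{k-1}⟩) / max(⟨d_{k-1}, y_{k-1}⟩, ‖F_{k-1}‖²) and y_{k-1} = F_k - F_{k-1}. -/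
/-!
Since `‖F_k - F_{k-1}‖ ≤ L λ_{k-1} ‖d_{k-1}‖ → 0`, the numerator of `β̄_k` is at most
`ω₁ ‖F_k - F_{k-1}‖ → 0` by Cauchy–Schwarz, while its denominator is at least
`‖F_{k-1}‖² ≥ ξ² > 0`.
-/

open Filter Topology RealInnerProductSpace

variable {E : Type*} [NormedAddCommGroup E] [InnerProductSpace ℝ E]

/-- `β̄_k = betaBar F_k F_{k-1} d_{k-1}`. -/
noncomputable def betaBar (g g' d : E) : ℝ :=
  max 0 ⟪g, g - g'⟫ / max ⟪d, g - g'⟫ (‖g'‖ ^ 2)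

lemma betaBar_nonneg (g g' d : E) : 0 ≤ betaBar g g' d :=
  div_nonneg (le_max_left _ _) ((sq_nonneg _).trans (le_max_right _ _))

lemma betaBar_le {g g' d : E} {ξ : ℝ} (hξ : 0 < ξ) (hg' : ξ ≤ ‖g'‖) :
    betaBar g g' d ≤ ‖g‖ * ‖g - g'‖ / ξ ^ 2 :=
  div_le_div₀ (by positivity) (max_le (by positivity) (real_inner_le_norm _ _)) (by positivity)
    ((pow_le_pow_left₀ hξ.le hg' 2).trans (le_max_right _ _))

theorem stmt_11_general {n : ℕ} (F d : ℕ → EuclideanSpace ℝ (Fin n)) (lam : ℕ → ℝ)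
    (ω₁ L ξ : ℝ) (hξ : 0 < ξ)
    (htend : Filter.Tendsto (fun k => lam k * ‖d k‖) Filter.atTop (nhds 0))
    (hFbound : ∀ k, ‖F k‖ ≤ ω₁)
    (hLip : ∀ k ≥ 1, ‖F k - F (k - 1)‖ ≤ L * lam (k - 1) * ‖d (k - 1)‖)
    (hFlow : ∀ k ≥ 1, ξ ≤ ‖F (k - 1)‖) :
    Filter.Tendsto
      (fun k => max 0 (inner ℝ (F k) (F k - F (k - 1)) : ℝ) /
        max (inner ℝ (d (k - 1)) (F k - F (k - 1)) : ℝ) (‖F (k - 1)‖ ^ 2))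
      Filter.atTop (nhds 0) := by
  show Tendsto (fun k => betaBar (F k) (F (k - 1)) (d (k - 1))) atTop (𝓝 0)
  have hstep : Tendsto (fun k => ‖F k - F (k - 1)‖) atTop (𝓝 0) := by
    have hbound : Tendsto (fun k => L * (lam (k - 1) * ‖d (k - 1)‖)) atTop (𝓝 0) := by
      simpa using (htend.comp (tendsto_sub_atTop_nat 1)).const_mul L
    refine squeeze_zero' (.of_forall fun _ => norm_nonneg _) ?_ hbound
    filter_upwards [eventually_ge_atTop 1] with k hk
    simpa only [mul_assoc] using hLip k hk
  have hbound : Tendsto (fun k => ω₁ * ‖F k - F (k - 1)‖ / ξ ^ 2) atTop (𝓝 0) := by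
    simpa using (hstep.const_mul ω₁).div_const (ξ ^ 2)
  refine squeeze_zero' (.of_forall fun k => betaBar_nonneg _ _ _) ?_ hbound
  filter_upwards [eventually_ge_atTop 1] with k hk
  calc betaBar (F k) (F (k - 1)) (d (k - 1))
      ≤ ‖F k‖ * ‖F k - F (k - 1)‖ / ξ ^ 2 := betaBar_le hξ (hFlow k hk)
    _ ≤ ω₁ * ‖F k - F (k - 1)‖ / ξ ^ 2 := by gcongr; exact hFbound k

theorem stmt_11 {n : ℕ} (F d : ℕ → EuclideanSpace ℝ (Fin n)) (lam : ℕ → ℝ)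
    (ω₁ L ξ : ℝ) (hω₁ : 0 < ω₁) (hL : 0 < L) (hξ : 0 < ξ)
    (hlam : ∀ k, 0 < lam k)
    (htend : Filter.Tendsto (fun k => lam k * ‖d k‖) Filter.atTop (nhds 0))
    (hFbound : ∀ k, ‖F k‖ ≤ ω₁)
    (hLip : ∀ k ≥ 1, ‖F k - F (k - 1)‖ ≤ L * lam (k - 1) * ‖d (k - 1)‖)
    (hFlow : ∀ k ≥ 1, ξ ≤ ‖F (k - 1)‖) :
    Filter.Tendsto
      (fun k => max 0 (inner ℝ (F k) (F k - F (k - 1)) : ℝ) /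
        max (inner ℝ (d (k - 1)) (F k - F (k - 1)) : ℝ) (‖F (k - 1)‖ ^ 2))
      Filter.atTop (nhds 0) :=
  stmt_11_general F d lam ω₁ L ξ hξ htend hFbound hLip hFlow
end
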